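/- The Hilbert function sequence of R/I for any almost reverse lexicographic ideal I in a polynomial ring R = k[x_1,...,x_n] is unimodal at each tail. -/

import Mathlib

open scoped Classical

/-- Degree of an exponent vector (monomial). -/
def mdeg {n : ℕ} (m : Fin n → ℕ) : ℕ := ∑ i, m i

/-- Degree reverse lexicographic order: `M > N`. -/
def RevLexGT {n : ℕ} (M N : Fin n → ℕ) : Prop :=
  mdeg N < mdeg M ∨
    (mdeg M = mdeg N ∧ ∃ s : Fin n, (∀ i : Fin n, s < i → M i = N i) ∧ M s < N s)

/-- A monomial ideal, identified with its set of monomials (exponent vectors),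
is upward closed under divisibility. -/
def MonIdeal {n : ℕ} (I : Set (Fin n → ℕ)) : Prop :=
  ∀ m ∈ I, ∀ m' : Fin n → ℕ, (∀ i, m i ≤ m' i) → m' ∈ I

/-- `m` is a minimal generator of the monomial ideal `I`. -/
def MinGen {n : ℕ} (I : Set (Fin n → ℕ)) (m : Fin n → ℕ) : Prop :=
  m ∈ I ∧ ∀ m' ∈ I, (∀ i, m' i ≤ m i) → m' = m

/-- Almost reverse lexicographic ideal. -/
def ARL {n : ℕ} (I : Set (Fin n → ℕ)) : Prop :=
  ∀ M N : Fin n → ℕ, MinGen I N → mdeg M = mdeg N → RevLexGT M N → M ∈ I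

/-- Strongly stable monomial ideal. -/
def StronglyStable {n : ℕ} (I : Set (Fin n → ℕ)) : Prop :=
  MonIdeal I ∧ ∀ M ∈ I, ∀ i j : Fin n, j < i → 0 < M i →
    (fun k => if k = i then M i - 1 else if k = j then M j + 1 else M k) ∈ I

/-- The last generator `M_ω` of a monomial ideal: a minimal generator of maximal
degree which is smallest in the degree reverse lexicographic order among the
minimal generators of that degree. -/
def IsLastGen {n : ℕ} (I : Set (Fin n → ℕ)) (W : Fin n → ℕ) : Prop :=
  MinGen I W ∧ (∀ N, MinGen I N → mdeg N ≤ mdeg W) ∧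
    (∀ N, MinGen I N → mdeg N = mdeg W → N = W ∨ RevLexGT N W)

/-- `max M`: the largest (1-based) index of a variable dividing `M` (0 for `M = 1`). -/
def maxVar {n : ℕ} (m : Fin n → ℕ) : ℕ :=
  Finset.univ.sup (fun i : Fin n => if 0 < m i then i.1 + 1 else 0)

/-- Hilbert function of `R/I`: the number of monomials of degree `d` not in `I`. -/
noncomputable def hilb {n : ℕ} (I : Set (Fin n → ℕ)) (d : ℕ) : ℕ :=
  Set.ncard {m : Fin n → ℕ | mdeg m = d ∧ m ∉ I}

/-- Truncation of an exponent vector to its first `i` coordinates. -/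
def truncW {n : ℕ} (W : Fin n → ℕ) (i : ℕ) : Fin n → ℕ :=
  fun j => if j.1 < i then W j else 0

/-- The set `𝓘_i` (for `i ≤ μ-2`): exponent vectors supported on the first `i`
coordinates, coordinatewise below the `f_j`'s, i.e. not lying in `I`. -/
def Iset {n : ℕ} (I : Set (Fin n → ℕ)) (i : ℕ) : Set (Fin n → ℕ) :=
  {α | (∀ k : Fin n, i ≤ k.1 → α k = 0) ∧ α ∉ I}

/-- The set `𝓘_{μ-1}`, which additionally requires `α ≥ (ω_1,…,ω_{μ-1})`. -/
def IsetLast {n : ℕ} (I : Set (Fin n → ℕ)) (W : Fin n → ℕ) (μ : ℕ) :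
    Set (Fin n → ℕ) :=
  {α | α ∈ Iset I (μ - 1) ∧ (α = truncW W (μ - 1) ∨ RevLexGT α (truncW W (μ - 1)))}

/-- `f_{i+1}(α) = min {t : x^α x_{i+1}^t ∈ I}` (ℕ-valued, junk `0` if no such `t`). -/
noncomputable def fmin {n : ℕ} (I : Set (Fin n → ℕ)) (α : Fin n → ℕ) (i : Fin n) : ℕ :=
  sInf {t | α + Pi.single i t ∈ I}

/-- `f_{i+1}(α)` valued in `ℕ∞` (equal to `⊤` when no power works). -/
noncomputable def fminTop {n : ℕ} (I : Set (Fin n → ℕ)) (α : Fin n → ℕ) (i : Fin n) : ℕ∞ :=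
  sInf ((fun t : ℕ => (t : ℕ∞)) '' {t | α + Pi.single i t ∈ I})

/-- Iterated truncated difference sequence `h^{(i)}`. -/
def hseq (h : ℕ → ℕ) : ℕ → ℕ → ℕ
  | 0, d => h d
  | _ + 1, 0 => 1
  | i + 1, e + 1 => hseq h i (e + 1) - hseq h i e

/-- The set whose infimum is `r_i(h)`. -/
def rset (h : ℕ → ℕ) (i : ℕ) : Set ℕ :=
  {d | 1 ≤ d ∧ hseq h i d ≤ hseq h i (d - 1)}

/-- `D(h) = min {i : r_i < ∞}`. -/
noncomputable def Dval (h : ℕ → ℕ) : ℕ := sInf {i | (rset h i).Nonempty}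

/-- `h` is unimodal at each tail. -/
def UnimodalAtTails (h : ℕ → ℕ) : Prop :=
  ∀ i, Dval h ≤ i → i < max 1 (h 1) →
    ∀ d, (∃ r ∈ rset h i, r ≤ d) → hseq h i d ≤ hseq h i (d - 1)

/-- The polynomial `Π (1 - z^{d_i})`. -/
noncomputable def froPoly (ds : List ℕ) : Polynomial ℤ :=
  (ds.map (fun d => 1 - Polynomial.X ^ d)).prod

/-- Coefficient of `z^i` in the power series `Π (1 - z^{d_i}) / (1-z)^n`. -/
noncomputable def froCoeff (n : ℕ) (ds : List ℕ) (i : ℕ) : ℤ :=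
  ∑ j ∈ Finset.range (i + 1),
    (froPoly ds).coeff j * (Nat.choose (n - 1 + (i - j)) (i - j) : ℤ)

/-- The Fröberg sequence `|n; d_1,…,d_m|`: the truncation `| · |` of the power
series `Π (1 - z^{d_i}) / (1-z)^n`. -/
noncomputable def fro (n : ℕ) (ds : List ℕ) (i : ℕ) : ℕ :=
  if ∀ j ≤ i, 0 < froCoeff n ds j then (froCoeff n ds i).toNat else 0

/-!
Let `I' ⊆ R' = k[x_1, …, x_n]` be the image of an almost reverse lexicographic ideal
`I ⊆ k[x_1, …, x_{n+1}]` modulo `x_{n+1}`; it is again almost reverse lexicographic. If a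
standard monomial `m ∉ I` of degree `d` has `m x_{n+1} ∈ I`, the minimal generator dividing
`m x_{n+1}` involves `x_{n+1}`, so by the revlex condition every monomial of degree `d + 1` free
of `x_{n+1}` lies in `I`, i.e. `(R'/I')_{d+1} = 0`. Otherwise multiplication by `x_{n+1}` is
injective in degree `d`. Either way `H(R'/I', d + 1) = max {0, h_{d+1} - h_d}`, so `h^{(1)}` is the
Hilbert function of `R'/I'`, and `h` never increases again once it has decreased. Since
`h^{(i+1)}` is the `i`-th iterated difference of `h^{(1)}`, induction on `n` finishes the proof.
-/

section Sequences

lemma hseq_succ (h : ℕ → ℕ) : ∀ i, hseq h (i + 1) = hseq (hseq h 1) i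
  | 0 => rfl
  | i + 1 => by
    funext d
    cases d with
    | zero => rfl
    | succ e =>
      show hseq h (i + 1) (e + 1) - hseq h (i + 1) e = _
      rw [hseq_succ h i]
      rfl

lemma unimodalAtTails_of_forall_eq_zero {h : ℕ → ℕ} (hz : ∀ d, 1 ≤ d → h d = 0) :
    UnimodalAtTails h := by
  rintro i - hi d ⟨r, ⟨hr, -⟩, hrd⟩
  obtain rfl : i = 0 := by rw [hz 1 le_rfl] at hi; omega
  simp [hseq, hz d (by omega)]

lemma unimodalAtTails_of_hseq_one {h : ℕ → ℕ} (h0 : h 0 = 1)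
    (hdec : ∀ e, h (e + 1) ≤ h e → h (e + 2) ≤ h (e + 1))
    (htail : UnimodalAtTails (hseq h 1)) : UnimodalAtTails h := by
  rintro (_ | j) - hj d ⟨r, ⟨hr, hr_le⟩, hrd⟩
  · obtain ⟨e, rfl⟩ : ∃ e, d = e + 1 := ⟨d - 1, by omega⟩
    have hre : r - 1 ≤ e := by omega
    clear hrd
    induction e, hre using Nat.le_induction with
    | base => simpa [show r - 1 + 1 = r by omega] using hr_le
    | succ e _ ih => exact hdec e ih
  · have h1 : hseq h 1 1 = h 1 - 1 := by simp [hseq, h0]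
    rw [hseq_succ] at hr_le ⊢
    have hr' : r ∈ rset (hseq h 1) j := ⟨hr, hr_le⟩
    exact htail j (Nat.sInf_le ⟨r, hr'⟩) (by rw [h1]; omega) d ⟨r, hr', hrd⟩

end Sequences

section Monomials

variable {n : ℕ}

lemma mdeg_add (a b : Fin n → ℕ) : mdeg (a + b) = mdeg a + mdeg b :=
  Finset.sum_add_distrib

lemma mdeg_single (i : Fin n) (c : ℕ) : mdeg (Pi.single i c) = c := by
  simp [mdeg]

lemma mdeg_snoc (α : Fin n → ℕ) (c : ℕ) :
    mdeg (Fin.snoc α c : Fin (n + 1) → ℕ) = mdeg α + c := by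
  simp [mdeg, Fin.sum_univ_castSucc]

lemma mdeg_mono : Monotone (mdeg : (Fin n → ℕ) → ℕ) :=
  fun _ _ h => Finset.sum_le_sum fun i _ => h i

lemma finite_setOf_mdeg_eq (d : ℕ) : {m : Fin n → ℕ | mdeg m = d}.Finite :=
  (Set.Finite.pi fun _ => Set.finite_Iic d).subset fun m hm i _ =>
    hm ▸ Finset.single_le_sum (fun j _ => Nat.zero_le (m j)) (Finset.mem_univ i)

lemma exists_le_mdeg_eq {M : Fin n → ℕ} : ∀ t ≤ mdeg M, ∃ M₀ ≤ M, mdeg M₀ = t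
  | 0, _ => ⟨0, fun _ => Nat.zero_le _, by simp [mdeg]⟩
  | t + 1, ht => by
    obtain ⟨M₀, hle, hdeg⟩ := exists_le_mdeg_eq (M := M) t (by omega)
    obtain ⟨i, hi⟩ : ∃ i, M₀ i < M i := by
      by_contra! h
      exact absurd (mdeg_mono h) (by omega)
    refine ⟨M₀ + Pi.single i 1, fun j => ?_, by rw [mdeg_add, mdeg_single, hdeg]⟩
    rcases eq_or_ne j i with rfl | hj
    · simpa using hi
    · simpa [hj] using hle j

end Monomials

section MonomialIdeals

variable {n : ℕ} {I : Set (Fin n → ℕ)}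

lemma exists_minGen_le {m : Fin n → ℕ} (hm : m ∈ I) : ∃ N ≤ m, MinGen I N := by
  obtain ⟨N, ⟨hNI, hNm⟩, hmin⟩ :=
    wellFounded_lt.has_min {m' | m' ∈ I ∧ m' ≤ m} ⟨m, hm, le_rfl⟩
  refine ⟨N, hNm, hNI, fun m' hm' hle => ?_⟩
  by_contra hne
  exact hmin m' ⟨hm', (show m' ≤ N from hle).trans hNm⟩ (lt_of_le_of_ne hle hne)

lemma hilb_eq_zero_iff {d : ℕ} : hilb I d = 0 ↔ ∀ m, mdeg m = d → m ∈ I := by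
  rw [hilb, Set.ncard_eq_zero ((finite_setOf_mdeg_eq d).subset fun _ hm => hm.1)]
  simp [Set.eq_empty_iff_forall_notMem]

lemma hilb_zero_of_zero_notMem (h0 : 0 ∉ I) : hilb I 0 = 1 := by
  have : {m : Fin n → ℕ | mdeg m = 0 ∧ m ∉ I} = {0} := by
    ext m
    refine ⟨fun ⟨hd, _⟩ => funext fun i => ?_, ?_⟩
    · exact (Finset.sum_eq_zero_iff.mp hd) i (Finset.mem_univ i)
    · rintro rfl
      exact ⟨by simp [mdeg], h0⟩
  rw [hilb, this, Set.ncard_singleton]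

lemma MonIdeal.hilb_succ_eq_zero (hI : MonIdeal I) {d : ℕ} (h : hilb I d = 0) :
    hilb I (d + 1) = 0 := by
  rw [hilb_eq_zero_iff] at h ⊢
  intro M hM
  obtain ⟨M₀, hle, hdeg⟩ := exists_le_mdeg_eq (M := M) d (by omega)
  exact hI M₀ (h M₀ hdeg) M hle

end MonomialIdeals

section RestrictLast

variable {n : ℕ} {I : Set (Fin (n + 1) → ℕ)}

/-- The image of `I` in `k[x_1, …, x_n] = k[x_1, …, x_{n+1}] / (x_{n+1})`. -/
def restrictLast (I : Set (Fin (n + 1) → ℕ)) : Set (Fin n → ℕ) :=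
  {α | Fin.snoc α 0 ∈ I}

lemma monIdeal_restrictLast (hI : MonIdeal I) : MonIdeal (restrictLast I) := by
  intro α hα α' hle
  refine hI _ hα _ fun i => ?_
  induction i using Fin.lastCases with
  | last => simp
  | cast i => simpa using hle i

lemma MinGen.snoc_zero {N : Fin n → ℕ} (hN : MinGen (restrictLast I) N) :
    MinGen I (Fin.snoc N 0) := by
  refine ⟨hN.1, fun m hm hle => ?_⟩
  have hlast : m (Fin.last n) = 0 := by simpa using hle (Fin.last n)
  have hm_eq : Fin.snoc (Fin.init m) 0 = m := hlast ▸ Fin.snoc_init_self m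
  rw [← hm_eq, hN.2 (Fin.init m) (by rwa [restrictLast, Set.mem_ofPred_eq, hm_eq])
    fun i => by simpa [Fin.init] using hle i.castSucc]

lemma arl_restrictLast (hA : ARL I) : ARL (restrictLast I) := by
  intro M N hN hdeg hgt
  refine hA _ _ hN.snoc_zero (by rw [mdeg_snoc, mdeg_snoc, hdeg]) ?_
  rcases hgt with hlt | ⟨heq, s, hs, hlt⟩
  · left; rw [mdeg_snoc, mdeg_snoc]; omega
  · refine Or.inr ⟨by rw [mdeg_snoc, mdeg_snoc, heq], s.castSucc, fun i hi => ?_,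
      by simpa using hlt⟩
    induction i using Fin.lastCases with
    | last => simp
    | cast i => simpa using hs i (by simpa using hi)

@[simp]
lemma zero_mem_restrictLast : 0 ∈ restrictLast I ↔ 0 ∈ I := by
  have : (Fin.snoc (0 : Fin n → ℕ) 0 : Fin (n + 1) → ℕ) = 0 := by
    funext i
    induction i using Fin.lastCases <;> simp
  rw [restrictLast, Set.mem_ofPred_eq, this]

lemma hilb_restrictLast (I : Set (Fin (n + 1) → ℕ)) (d : ℕ) :
    hilb (restrictLast I) d = {M | mdeg M = d ∧ M ∉ I ∧ M (Fin.last n) = 0}.ncard := by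
  rw [hilb, ← Set.ncard_preimage_of_injective_subset_range
    (f := fun α : Fin n → ℕ => (Fin.snoc α 0 : Fin (n + 1) → ℕ))
    (fun a b hab => by simpa using congrArg Fin.init hab)]
  · congr 1
    ext α
    simp [restrictLast, mdeg_snoc]
  · rintro M ⟨-, -, hlast⟩
    exact ⟨Fin.init M, hlast ▸ Fin.snoc_init_self M⟩

end RestrictLast

section LastVariable

variable {n : ℕ} {I : Set (Fin (n + 1) → ℕ)}

local notation "xₗ" => (Pi.single (Fin.last n) 1 : Fin (n + 1) → ℕ)

lemma ARL.mem_of_last_eq_zero (hI : MonIdeal I) (hA : ARL I) {N : Fin (n + 1) → ℕ}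
    (hN : MinGen I N) (hN_last : 0 < N (Fin.last n)) {M : Fin (n + 1) → ℕ}
    (hM_last : M (Fin.last n) = 0) (hdeg : mdeg N ≤ mdeg M) : M ∈ I := by
  obtain ⟨M₀, hle, hM₀⟩ := exists_le_mdeg_eq (M := M) (mdeg N) hdeg
  -- `M₀` is revlex-larger than `N`: it has the smaller exponent of the last variable.
  have hgt : RevLexGT M₀ N :=
    Or.inr ⟨hM₀, Fin.last n, fun i hi => absurd hi (not_lt.mpr (Fin.le_last i)),
      by have : M₀ (Fin.last n) ≤ M (Fin.last n) := hle _; omega⟩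
  exact hI M₀ (hA M₀ N hN hM₀ hgt) M hle

lemma ARL.hilb_restrictLast_eq_zero (hI : MonIdeal I) (hA : ARL I) {m : Fin (n + 1) → ℕ}
    (hm : m ∉ I) (hmx : m + xₗ ∈ I) : hilb (restrictLast I) (mdeg m + 1) = 0 := by
  obtain ⟨N, hNle, hN⟩ := exists_minGen_le hmx
  have hN_last : 0 < N (Fin.last n) := by
    by_contra! h0
    refine hm (hI N hN.1 m fun i => ?_)
    rcases eq_or_ne i (Fin.last n) with rfl | hi
    · omega
    · simpa [hi] using hNle i
  have hdeg : mdeg N ≤ mdeg m + 1 := by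
    simpa [mdeg_add, mdeg_single] using mdeg_mono hNle
  rw [hilb_eq_zero_iff]
  intro α hα
  exact hA.mem_of_last_eq_zero hI hN hN_last (by simp) (by rw [mdeg_snoc]; omega)

lemma hilb_succ_eq_hilb_restrictLast_add (I : Set (Fin (n + 1) → ℕ)) (d : ℕ) :
    hilb I (d + 1) = hilb (restrictLast I) (d + 1) + {m | mdeg m = d ∧ m + xₗ ∉ I}.ncard := by
  have hfin : {m | mdeg m = d + 1 ∧ m ∉ I}.Finite :=
    (finite_setOf_mdeg_eq (d + 1)).subset fun _ hm => hm.1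
  have hrange : {m | mdeg m = d + 1 ∧ m ∉ I} \ {M | M (Fin.last n) = 0} ⊆
      Set.range (· + xₗ) := by
    rintro M ⟨-, hM_last : M (Fin.last n) ≠ 0⟩
    refine ⟨M - xₗ, funext fun i => ?_⟩
    rcases eq_or_ne i (Fin.last n) with rfl | hi
    · simp; omega
    · simp [hi]
  rw [hilb, hilb_restrictLast,
    ← Set.ncard_inter_add_ncard_sdiff_eq_ncard _ {M | M (Fin.last n) = 0} hfin,
    ← Set.ncard_preimage_of_injective_subset_range (add_left_injective xₗ) hrange]
  congr 2
  · ext M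
    simp [and_assoc]
  · ext m
    simp [mdeg_add, mdeg_single]

lemma ARL.hilb_restrictLast_succ (hI : MonIdeal I) (hA : ARL I) (d : ℕ) :
    hilb (restrictLast I) (d + 1) = hilb I (d + 1) - hilb I d := by
  have hsplit := hilb_succ_eq_hilb_restrictLast_add I d
  have hsub : {m | mdeg m = d ∧ m + xₗ ∉ I} ⊆ {m | mdeg m = d ∧ m ∉ I} :=
    fun m ⟨hd, hmx⟩ => ⟨hd, fun hm => hmx (hI m hm _ fun i => by simp)⟩
  by_cases hzd : ∃ m, mdeg m = d ∧ m ∉ I ∧ m + xₗ ∈ I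
  · obtain ⟨m, rfl, hm, hmx⟩ := hzd
    have : _ ≤ hilb I (mdeg m) :=
      Set.ncard_le_ncard hsub ((finite_setOf_mdeg_eq _).subset fun _ h => h.1)
    rw [hA.hilb_restrictLast_eq_zero hI hm hmx] at hsplit ⊢
    omega
  · push Not at hzd
    have heq : {m | mdeg m = d ∧ m + xₗ ∉ I} = {m | mdeg m = d ∧ m ∉ I} :=
      hsub.antisymm fun m ⟨hd, hm⟩ => ⟨hd, fun hmx => hzd m hd hm hmx⟩
    rw [heq, ← hilb] at hsplit
    omega

lemma ARL.hilb_add_two_le (hI : MonIdeal I) (hA : ARL I) {e : ℕ}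
    (he : hilb I (e + 1) ≤ hilb I e) :
    hilb I (e + 2) ≤ hilb I (e + 1) := by
  have h1 : hilb (restrictLast I) (e + 1) = 0 := by
    rw [hA.hilb_restrictLast_succ hI]; omega
  have h2 := (monIdeal_restrictLast hI).hilb_succ_eq_zero h1
  rw [hA.hilb_restrictLast_succ hI] at h2
  exact Nat.sub_eq_zero_iff_le.mp h2

lemma ARL.hseq_hilb_one (hI : MonIdeal I) (hA : ARL I) (h0 : 0 ∉ I) :
    hseq (hilb I) 1 = hilb (restrictLast I) := by
  funext d
  cases d with
  | zero => exact (hilb_zero_of_zero_notMem (by simpa using h0)).symm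
  | succ e => exact (hA.hilb_restrictLast_succ hI e).symm

end LastVariable


theorem ARL.unimodalAtTails_hilb :
    ∀ {n : ℕ} {I : Set (Fin n → ℕ)}, MonIdeal I → ARL I → 0 ∉ I → UnimodalAtTails (hilb I)
  | 0, I, _, _, _ => unimodalAtTails_of_forall_eq_zero fun d hd => by
    rw [hilb_eq_zero_iff]
    intro m hm
    simp [mdeg] at hm
    omega
  | n + 1, I, hI, hA, h0 =>
    unimodalAtTails_of_hseq_one (hilb_zero_of_zero_notMem h0) (fun _ => hA.hilb_add_two_le hI)
      (hA.hseq_hilb_one hI h0 ▸ ARL.unimodalAtTails_hilb (monIdeal_restrictLast hI)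
        (arl_restrictLast hA) (by simpa using h0))

/-- The Hilbert function of `R/I` for any almost reverse
lexicographic ideal `I` is unimodal at each tail. -/
theorem arl_hilbert_unimodal_at_tails {n : ℕ} (I : Set (Fin n → ℕ))
    (hI : MonIdeal I) (hARL : ARL I) :
    UnimodalAtTails (fun d => hilb I d) := by
  by_cases h0 : 0 ∈ I
  · exact unimodalAtTails_of_forall_eq_zero fun d _ =>
      hilb_eq_zero_iff.mpr fun m _ => hI 0 h0 m fun i => Nat.zero_le _
  · exact hARL.unimodalAtTails_hilb hI h0
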